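/- Let k be a field of characteristic zero, q ∈ k a primitive e-th root of unity, and f ∈ k[h] with f(0) ≠ 0. Let π : k[h] → k[h]/(f) be the canonical projection and S = k[h^e]. Then for every l ≥ 0, the dimension over k of the image π(h^l·S) equals deg(N(f))/e, where N(f) = lcm(f, σ(f), ..., σ^{e−1}(f)) and σ(h) = qh. -/

import Mathlib

open Polynomial

/-!
Write `σ` for `X ↦ q X`. It permutes the divisibility conditions defining `N(f)`, so
`N(f) ∣ σ N(f)`; as both have the same degree and the same nonzero constant term,
`σ N(f) = N(f)`, and then `N(f) = M(X^e)` because `q` is a primitive `e`-th root of unity.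
The map `s ↦ π(X^l s(X^e))` is `k`-linear; since `X^l` is a unit modulo `f`, `s` lies in its
kernel iff `f ∣ s(X^e)`, iff `N(f) ∣ s(X^e)` (`s(X^e)` being `σ`-invariant), iff `M ∣ s`.
So the image is `k[X]/(M)`, of dimension `deg M = deg N(f) / e`.
-/

namespace Polynomial

section CommSemiring

variable {R : Type*} [CommSemiring R]

lemma comp_C_mul_X_comp_C_mul_X (p : R[X]) (a b : R) :
    (p.comp (C a * X)).comp (C b * X) = p.comp (C (a * b) * X) := by
  rw [comp_assoc, mul_comp, C_comp, X_comp, ← mul_assoc, ← C_mul]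

lemma comp_dvd_comp {p r : R[X]} (h : p ∣ r) (g : R[X]) : p.comp g ∣ r.comp g := by
  obtain ⟨u, rfl⟩ := h
  exact ⟨u.comp g, mul_comp p u g⟩

lemma natDegree_comp_C_mul_X_le (p : R[X]) (a : R) : (p.comp (C a * X)).natDegree ≤ p.natDegree :=
  natDegree_comp_le.trans <| by
    simpa using Nat.mul_le_mul_left p.natDegree ((natDegree_C_mul_le a X).trans natDegree_X_le)

lemma expand_comp_C_mul_X {a : R} {e : ℕ} (ha : a ^ e = 1) (s : R[X]) :
    (expand R e s).comp (C a * X) = expand R e s := by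
  rw [expand_eq_comp_X_pow, comp_assoc, X_pow_comp, mul_pow, ← C_pow, ha, C_1, one_mul]

lemma forall_comp_C_pow_mul_X_dvd_comp {q : R} {e : ℕ} (hq : q ^ e = 1) {f m : R[X]}
    (hm : ∀ i < e, f.comp (C (q ^ i) * X) ∣ m) :
    ∀ i < e, f.comp (C (q ^ i) * X) ∣ m.comp (C q * X) := by
  intro i hi
  obtain ⟨j, hj, hji⟩ : ∃ j < e, q ^ j * q = q ^ i := by
    rcases i with _ | i
    · exact ⟨e - 1, by omega, by rw [← pow_succ, Nat.sub_add_cancel (by omega), hq, pow_zero]⟩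
    · exact ⟨i, by omega, (pow_succ q i).symm⟩
  rw [← hji, ← comp_C_mul_X_comp_C_mul_X]
  exact comp_dvd_comp (hm j hj) (C q * X)

end CommSemiring

section IsDomain

variable {R : Type*} [CommRing R] [IsDomain R]

lemma eq_of_dvd_of_natDegree_le_of_coeff_zero {p r : R[X]} (hpr : p ∣ r)
    (hdeg : r.natDegree ≤ p.natDegree) (h0 : p.coeff 0 = r.coeff 0) (hp0 : p.coeff 0 ≠ 0) :
    p = r := by
  have hr : r ≠ 0 := fun h => hp0 (by rw [h0, h, coeff_zero])
  replace hdeg := (natDegree_le_of_dvd hpr hr).antisymm hdeg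
  obtain ⟨u, rfl⟩ := hpr
  rw [mul_ne_zero_iff] at hr
  rw [natDegree_mul hr.1 hr.2, left_eq_add] at hdeg
  rw [eq_C_of_natDegree_eq_zero hdeg, mul_coeff_zero, coeff_C_zero, eq_comm,
    mul_eq_left₀ hp0] at h0
  rw [eq_C_of_natDegree_eq_zero hdeg, h0, map_one, mul_one]

lemma expand_contract_of_comp_C_mul_X_eq_self {q : R} {e : ℕ} (hq : IsPrimitiveRoot q e)
    (he : 0 < e) {p : R[X]} (hp : p.comp (C q * X) = p) : expand R e (contract e p) = p := by
  ext n
  rw [coeff_expand he, coeff_contract he.ne']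
  split_ifs with hn
  · rw [Nat.div_mul_cancel hn]
  · by_contra hc
    have hqn : p.coeff n * q ^ n = p.coeff n * 1 := by
      rw [← comp_C_mul_X_coeff, hp, mul_one]
    exact hn (hq.pow_eq_one_iff_dvd n |>.1 (mul_left_cancel₀ (Ne.symm hc) hqn))

end IsDomain

/-- `N` is an lcm of the orbit of `f` under `σ : X ↦ q X`: an `N(f)` that need not be monic. -/
def IsOrbitLcm {R : Type*} [CommSemiring R] (q : R) (e : ℕ) (f N : R[X]) : Prop :=
  (∀ i < e, f.comp (C (q ^ i) * X) ∣ N) ∧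
    ∀ m : R[X], (∀ i < e, f.comp (C (q ^ i) * X) ∣ m) → N ∣ m

namespace IsOrbitLcm

section IsDomain

variable {R : Type*} [CommRing R] [IsDomain R] {q : R} {e : ℕ} {f N : R[X]}

lemma coeff_zero_ne_zero (hN : IsOrbitLcm q e f N) (hf : f.eval 0 ≠ 0) : N.coeff 0 ≠ 0 := by
  obtain ⟨v, hv⟩ := hN.2 (∏ i ∈ Finset.range e, f.comp (C (q ^ i) * X))
    fun i hi => Finset.dvd_prod_of_mem _ (Finset.mem_range.2 hi)
  have hprod : (∏ i ∈ Finset.range e, f.comp (C (q ^ i) * X)).coeff 0 ≠ 0 := by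
    rw [coeff_zero_eq_eval_zero, eval_prod]
    exact Finset.prod_ne_zero_iff.2 fun i _ => by simpa using hf
  rw [hv, mul_coeff_zero] at hprod
  exact left_ne_zero_of_mul hprod

lemma comp_C_mul_X_eq_self (hN : IsOrbitLcm q e f N) (hq : q ^ e = 1) (hf : f.eval 0 ≠ 0) :
    N.comp (C q * X) = N :=
  (eq_of_dvd_of_natDegree_le_of_coeff_zero (hN.2 _ (forall_comp_C_pow_mul_X_dvd_comp hq hN.1))
    (natDegree_comp_C_mul_X_le N q) (by simp) (hN.coeff_zero_ne_zero hf)).symm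

lemma expand_contract (hN : IsOrbitLcm q e f N) (hq : IsPrimitiveRoot q e) (he : 0 < e)
    (hf : f.eval 0 ≠ 0) : expand R e (contract e N) = N :=
  expand_contract_of_comp_C_mul_X_eq_self hq he (hN.comp_C_mul_X_eq_self hq.pow_eq_one hf)

end IsDomain

variable {K : Type*} [Field K] {q : K} {e : ℕ} {f N : K[X]}

lemma dvd_X_pow_mul_expand_iff (hN : IsOrbitLcm q e f N) (hq : IsPrimitiveRoot q e) (he : 0 < e)
    (hf : f.eval 0 ≠ 0) (l : ℕ) (s : K[X]) :
    f ∣ X ^ l * expand K e s ↔ contract e N ∣ s := by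
  have hNe := hN.expand_contract hq he hf
  constructor
  · intro h
    have hcop : IsCoprime f ((X : K[X]) ^ l) := by
      refine IsCoprime.pow_right (irreducible_X.coprime_iff_not_dvd.2 ?_).symm
      rwa [X_dvd_iff, coeff_zero_eq_eval_zero]
    have hfs : f ∣ expand K e s := hcop.dvd_of_dvd_mul_left h
    obtain ⟨u, hu⟩ := hN.2 (expand K e s) fun i _ => by
      have hqi : (q ^ i) ^ e = 1 := by rw [← pow_mul, mul_comm, pow_mul, hq.pow_eq_one, one_pow]
      exact expand_comp_C_mul_X hqi s ▸ comp_dvd_comp hfs (C (q ^ i) * X)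
    have hu_inv : u.comp (C q * X) = u := by
      have hN0 : N ≠ 0 := fun h => hN.coeff_zero_ne_zero hf (by rw [h, coeff_zero])
      refine mul_left_cancel₀ hN0 ?_
      calc N * u.comp (C q * X) = (N * u).comp (C q * X) := by
            rw [mul_comp, hN.comp_C_mul_X_eq_self hq.pow_eq_one hf]
        _ = N * u := by rw [← hu, expand_comp_C_mul_X hq.pow_eq_one]
    refine ⟨contract e u, expand_injective he ?_⟩
    rw [map_mul, expand_contract_of_comp_C_mul_X_eq_self hq he hu_inv, hNe, hu]
  · rintro ⟨t, rfl⟩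
    have hfN : f ∣ N := by simpa using hN.1 0 he
    refine (hfN.trans ?_).mul_left _
    rw [map_mul, hNe]
    exact dvd_mul_right _ _

end IsOrbitLcm

lemma finrank_range_eq_natDegree_of_ker_eq {K V : Type*} [Field K] [AddCommGroup V] [Module K V]
    (ψ : K[X] →ₗ[K] V) {M : K[X]} (hker : LinearMap.ker ψ = (Ideal.span {M}).restrictScalars K) :
    Module.finrank K (LinearMap.range ψ) = M.natDegree := by
  rw [← ψ.quotKerEquivRange.finrank_eq, hker,
    (Submodule.Quotient.restrictScalarsEquiv K _).finrank_eq, finrank_quotient_span_eq_natDegree]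

end Polynomial

theorem dim_pi_hlS_general (k : Type*) [Field k] (q : k) (e : ℕ)
    (he : 0 < e) (hq : IsPrimitiveRoot q e) (f : k[X]) (hf : f.eval 0 ≠ 0)
    (Nf : k[X])
    (hNdvd : ∀ i < e, f.comp (C (q ^ i) * X) ∣ Nf)
    (hNmin : ∀ m : k[X], (∀ i < e, f.comp (C (q ^ i) * X) ∣ m) → Nf ∣ m)
    (l : ℕ) :
    Module.finrank k ↥(Submodule.span k
        ((Ideal.Quotient.mk (Ideal.span {f})) ''
          {p : k[X] | ∃ s : k[X], p = X ^ l * s.comp (X ^ e)}))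
      = Nf.natDegree / e := by
  have hN : IsOrbitLcm q e f Nf := ⟨hNdvd, hNmin⟩
  let ψ : k[X] →ₗ[k] k[X] ⧸ Ideal.span {f} := (Ideal.Quotient.mkₐ k _).toLinearMap ∘ₗ
    LinearMap.mulLeft k (X ^ l) ∘ₗ (expand k e).toLinearMap
  have hrange : (Ideal.Quotient.mk (Ideal.span {f})) ''
      {p : k[X] | ∃ s : k[X], p = X ^ l * s.comp (X ^ e)} = LinearMap.range ψ := by
    ext x
    simp [ψ, expand_eq_comp_X_pow]
  have hker : LinearMap.ker ψ = (Ideal.span {contract e Nf}).restrictScalars k := by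
    ext s
    rw [LinearMap.mem_ker, Submodule.restrictScalars_mem, Ideal.mem_span_singleton,
      ← hN.dvd_X_pow_mul_expand_iff hq he hf l s, ← Ideal.mem_span_singleton,
      ← Ideal.Quotient.eq_zero_iff_mem]
    rfl
  rw [hrange, Submodule.span_eq, finrank_range_eq_natDegree_of_ker_eq ψ hker]
  conv_rhs => rw [← hN.expand_contract hq he hf, natDegree_expand, Nat.mul_div_cancel _ he]

/-- For `q` a primitive `e`-th root of unity, `f(0) ≠ 0`, `π : k[h] → k[h]/(f)`
the canonical projection and `S = k[h^e]`, the image `π(h^l·S)` has dimension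
`deg N(f) / e`, where `N(f)` is the monic lcm of `f, σf, …, σ^{e-1}f` and
`σ(h) = qh`. -/
theorem dim_pi_hlS (k : Type*) [Field k] [CharZero k] (q : k) (e : ℕ)
    (he : 0 < e) (hq : IsPrimitiveRoot q e) (f : k[X]) (hf : f.eval 0 ≠ 0)
    (Nf : k[X]) (hNmonic : Nf.Monic)
    (hNdvd : ∀ i < e, f.comp (C (q ^ i) * X) ∣ Nf)
    (hNmin : ∀ m : k[X], (∀ i < e, f.comp (C (q ^ i) * X) ∣ m) → Nf ∣ m)
    (l : ℕ) :
    Module.finrank k ↥(Submodule.span k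
        ((Ideal.Quotient.mk (Ideal.span {f})) ''
          {p : k[X] | ∃ s : k[X], p = X ^ l * s.comp (X ^ e)}))
      = Nf.natDegree / e :=
  dim_pi_hlS_general k q e he hq f hf Nf hNdvd hNmin l
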